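/- Define F_n as truncations of F and G_n of G (F_n = G_n = 1 for n < 0), and H_n truncations of H. Then for all n ≥ 0 and nonzero x: H_n(x) = x^{2(2^n−1)/3}·F_n(x^{−1}) if n is even, and H_n(x) = x^{(2^{n+1}−1)/3}·G_n(x^{−1}) if n is odd. -/

import Mathlib

/-- Substitution `q ↦ q^k` on formal power series: `psub k f = f(q^k)`. -/
noncomputable def psub (k : ℕ) (f : PowerSeries ℂ) : PowerSeries ℂ :=
  PowerSeries.mk fun n => if k ∣ n then PowerSeries.coeff (n / k) f else 0

open Finset

/-- Evaluation of the degree-`< N` truncation. -/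
noncomputable def S (N : ℕ) (f : PowerSeries ℂ) (x : ℂ) : ℂ :=
  ∑ i ∈ Finset.range N, PowerSeries.coeff i f * x ^ i

lemma coeff_psub (k n : ℕ) (f : PowerSeries ℂ) :
    PowerSeries.coeff n (psub k f)
      = if k ∣ n then PowerSeries.coeff (n / k) f else 0 := by
  simp [psub, PowerSeries.coeff_mk]

lemma trunc_eval (N : ℕ) (f : PowerSeries ℂ) (x : ℂ) :
    (PowerSeries.trunc N f).eval x = S N f x := by
  show Polynomial.eval x (∑ m ∈ Finset.Ico 0 N, Polynomial.monomial m (PowerSeries.coeff m f)) = _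
  rw [Polynomial.eval_finset_sum, S, Finset.range_eq_Ico]
  exact Finset.sum_congr rfl fun i _ => by rw [Polynomial.eval_monomial]

lemma S_add (N : ℕ) (f g : PowerSeries ℂ) (x : ℂ) :
    S N (f + g) x = S N f x + S N g x := by
  simp [S, add_mul, Finset.sum_add_distrib]

lemma S_X_mul (M : ℕ) (g : PowerSeries ℂ) (x : ℂ) :
    S (M + 1) (PowerSeries.X * g) x = x * S M g x := by
  rw [S, Finset.sum_range_succ']
  simp only [PowerSeries.coeff_succ_X_mul, pow_zero, mul_one]
  have h0 : PowerSeries.coeff 0 (PowerSeries.X * g) = 0 := by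
    simp [PowerSeries.coeff_zero_eq_constantCoeff]
  rw [h0, add_zero, S, Finset.mul_sum]
  exact Finset.sum_congr rfl fun i _ => by ring

lemma S_psub (k M : ℕ) (hk : 0 < k) (f : PowerSeries ℂ) (x : ℂ) :
    S (k * M) (psub k f) x = S M f (x ^ k) := by
  unfold S
  have h1 : ∀ i ∈ Finset.range (k * M),
      PowerSeries.coeff i (psub k f) * x ^ i
        = if k ∣ i then PowerSeries.coeff (i / k) f * x ^ i else 0 := by
    intro i _
    rw [coeff_psub]
    split <;> simp
  rw [Finset.sum_congr rfl h1, ← Finset.sum_filter]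
  refine Finset.sum_nbij' (fun i => i / k) (fun j => k * j) ?_ ?_ ?_ ?_ ?_
  · intro a ha
    simp only [Finset.mem_filter, Finset.mem_range] at ha
    exact Finset.mem_range.2 (Nat.div_lt_of_lt_mul (by omega))
  · intro a ha
    simp only [Finset.mem_range] at ha
    simp only [Finset.mem_filter, Finset.mem_range]
    exact ⟨(Nat.mul_lt_mul_left hk).2 ha, Dvd.intro a rfl⟩
  · intro a ha
    simp only [Finset.mem_filter] at ha
    exact Nat.mul_div_cancel' ha.2
  · intro a _
    exact Nat.mul_div_cancel_left a hk
  · intro a ha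
    simp only [Finset.mem_filter] at ha
    obtain ⟨c, rfl⟩ := ha.2
    simp [Nat.mul_div_cancel_left c hk, pow_mul]

lemma S_pred (k N : ℕ) (h : ¬ k ∣ N) (f : PowerSeries ℂ) (x : ℂ) :
    S (N + 1) (psub k f) x = S N (psub k f) x := by
  rw [S, Finset.sum_range_succ, coeff_psub, if_neg h, zero_mul, add_zero, S]

lemma stepA (f g : PowerSeries ℂ)
    (h : f = psub 2 g + PowerSeries.X * psub 4 f) (n : ℕ) (x : ℂ) :
    S (2 ^ (n + 2)) f x = S (2 ^ (n + 1)) g (x ^ 2) + x * S (2 ^ n) f (x ^ 4) := by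
  have hp : 1 ≤ (2:ℕ) ^ n := Nat.one_le_two_pow
  have hpow : (2:ℕ) ^ (n + 2) = 4 * 2 ^ n := by ring
  conv_lhs => rw [h]
  rw [S_add]
  congr 1
  · have h2 : (2:ℕ) ^ (n + 2) = 2 * 2 ^ (n + 1) := by ring
    rw [h2, S_psub 2 _ (by norm_num)]
  · have hN : (2:ℕ) ^ (n + 2) = (2 ^ (n + 2) - 1) + 1 := by omega
    rw [hN, S_X_mul]
    congr 1
    have hnd : ¬ (4 ∣ 2 ^ (n + 2) - 1) := by
      rw [hpow]; omega
    have h4 : 2 ^ (n + 2) - 1 + 1 = 4 * 2 ^ n := by omega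
    rw [← S_pred 4 _ hnd, h4, S_psub 4 _ (by norm_num)]

lemma stepB (f g : PowerSeries ℂ)
    (h : g = PowerSeries.X * psub 2 f + psub 4 g) (n : ℕ) (x : ℂ) :
    S (2 ^ (n + 2)) g x = x * S (2 ^ (n + 1)) f (x ^ 2) + S (2 ^ n) g (x ^ 4) := by
  have hp : 1 ≤ (2:ℕ) ^ n := Nat.one_le_two_pow
  have hpow : (2:ℕ) ^ (n + 2) = 4 * 2 ^ n := by ring
  conv_lhs => rw [h]
  rw [S_add]
  congr 1
  · have hN : (2:ℕ) ^ (n + 2) = (2 ^ (n + 2) - 1) + 1 := by omega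
    rw [hN, S_X_mul]
    congr 1
    have hnd : ¬ (2 ∣ 2 ^ (n + 2) - 1) := by
      rw [hpow]; omega
    have h2 : 2 ^ (n + 2) - 1 + 1 = 2 * 2 ^ (n + 1) := by
      rw [hpow]; have : (2:ℕ) ^ (n+1) = 2 * 2 ^ n := by ring
      omega
    rw [← S_pred 2 _ hnd, h2, S_psub 2 _ (by norm_num)]
  · rw [hpow, S_psub 4 _ (by norm_num)]

lemma two_pow_even_mod3 (n : ℕ) (hn : Even n) : 2 ^ n % 3 = 1 := by
  obtain ⟨k, rfl⟩ := hn
  induction k with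
  | zero => simp
  | succ m ih =>
    have h : (2:ℕ) ^ (m + 1 + (m + 1)) = 4 * 2 ^ (m + m) := by ring
    omega

theorem stmt13 (F G H : PowerSeries ℂ)
    (hF0 : PowerSeries.constantCoeff F = 1)
    (hG0 : PowerSeries.constantCoeff G = 1)
    (hF : F = psub 2 G + PowerSeries.X * psub 4 F)
    (hG : G = PowerSeries.X * psub 2 F + psub 4 G)
    (hH0 : PowerSeries.constantCoeff H = 1)
    (hH : H = psub 2 H + PowerSeries.X * psub 4 H) :
    ∀ n : ℕ, ∀ x : ℂ, x ≠ 0 →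
      (Even n → (PowerSeries.trunc (2 ^ n) H).eval x
          = x ^ (2 * (2 ^ n - 1) / 3) * (PowerSeries.trunc (2 ^ n) F).eval x⁻¹) ∧
      (Odd n → (PowerSeries.trunc (2 ^ n) H).eval x
          = x ^ ((2 ^ (n + 1) - 1) / 3) * (PowerSeries.trunc (2 ^ n) G).eval x⁻¹) := by
  have main : ∀ n : ℕ, ∀ x : ℂ, x ≠ 0 →
      (Even n → S (2 ^ n) H x = x ^ (2 * (2 ^ n - 1) / 3) * S (2 ^ n) F x⁻¹) ∧
      (Odd n → S (2 ^ n) H x = x ^ ((2 ^ (n + 1) - 1) / 3) * S (2 ^ n) G x⁻¹) := by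
    intro n
    induction n using Nat.strong_induction_on with
    | _ n ih =>
      match n with
      | 0 =>
        intro x hx
        constructor
        · intro _
          simp [S, PowerSeries.coeff_zero_eq_constantCoeff, hH0, hF0]
        · intro h
          exact absurd h (by decide)
      | 1 =>
        intro x hx
        have hH1 : PowerSeries.coeff 1 H = 1 := by
          conv_lhs => rw [hH]
          rw [map_add, coeff_psub, if_neg (by decide),
            PowerSeries.coeff_succ_X_mul 0, coeff_psub, if_pos (dvd_zero 4)]
          simpa [PowerSeries.coeff_zero_eq_constantCoeff] using hH0
        have hG1 : PowerSeries.coeff 1 G = 1 := by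
          conv_lhs => rw [hG]
          rw [map_add, PowerSeries.coeff_succ_X_mul 0, coeff_psub,
            if_pos (dvd_zero 2), coeff_psub, if_neg (by decide)]
          simpa [PowerSeries.coeff_zero_eq_constantCoeff] using hF0
        constructor
        · intro h
          exact absurd h (by decide)
        · intro _
          have e1 : S 2 H x = 1 + x := by
            simp [S, Finset.sum_range_succ, PowerSeries.coeff_zero_eq_constantCoeff,
              hH0, hH1]
          have e2 : S 2 G x⁻¹ = 1 + x⁻¹ := by
            simp [S, Finset.sum_range_succ, PowerSeries.coeff_zero_eq_constantCoeff,
              hG0, hG1]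
          rw [show (2:ℕ)^1 = 2 from rfl, e1, e2]
          norm_num
          field_simp
          ring
      | (n + 2) =>
        intro x hx
        have hx2 : (x ^ 2) ≠ 0 := pow_ne_zero _ hx
        have hx4 : (x ^ 4) ≠ 0 := pow_ne_zero _ hx
        have ih1 := ih (n + 1) (by omega) (x ^ 2) hx2
        have ih2 := ih n (by omega) (x ^ 4) hx4
        rcases Nat.even_or_odd n with hev | hod
        · -- n even, n + 2 even
          have hev2 : Even (n + 2) := by
            obtain ⟨k, hk⟩ := hev; exact ⟨k + 1, by omega⟩
          have hod1 : Odd (n + 1) := Even.add_one hev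
          have hm : (2:ℕ) ^ n % 3 = 1 := two_pow_even_mod3 n hev
          have hp : 1 ≤ (2:ℕ) ^ n := Nat.one_le_two_pow
          obtain ⟨c, hc⟩ : ∃ c, (2:ℕ) ^ n = 3 * c + 1 := ⟨2 ^ n / 3, by omega⟩
          have hpow2 : (2:ℕ) ^ (n + 2) = 4 * 2 ^ n := by ring
          have hpow1 : (2:ℕ) ^ (n + 1 + 1) = 4 * 2 ^ n := by ring
          have key_o : (2 ^ (n + 1 + 1) - 1) / 3
              = 2 * (2 * (2 ^ n - 1) / 3) + 1 := by
            rw [hpow1, hc]; omega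
          have key_E : 2 * (2 ^ (n + 2) - 1) / 3
              = 4 * (2 * (2 ^ n - 1) / 3) + 2 := by
            rw [hpow2, hc]; omega
          constructor
          · intro _
            rw [stepA H H hH n x, stepA F G hF n x⁻¹,
              (ih1.2 hod1), (ih2.1 hev), key_o, key_E,
              ← inv_pow x 2, ← inv_pow x 4]
            field_simp
            ring
          · intro h
            obtain ⟨a, ha⟩ := hev2
            obtain ⟨b, hb⟩ := h
            omega
        · -- n odd, n + 2 odd
          have hod2 : Odd (n + 2) := by
            obtain ⟨k, hk⟩ := hod; exact ⟨k + 1, by omega⟩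
          have hev1 : Even (n + 1) := Odd.add_one hod
          have hm : (2:ℕ) ^ (n + 1) % 3 = 1 := two_pow_even_mod3 (n + 1) hev1
          have hp : 1 ≤ (2:ℕ) ^ (n + 1) := Nat.one_le_two_pow
          obtain ⟨c, hc⟩ : ∃ c, (2:ℕ) ^ (n + 1) = 3 * c + 1 := ⟨2 ^ (n + 1) / 3, by omega⟩
          have key_E : 2 * (2 ^ (n + 1) - 1) / 3
              = 2 * ((2 ^ (n + 1) - 1) / 3) := by
            rw [hc]; omega
          have key_O : (2 ^ (n + 2 + 1) - 1) / 3
              = 4 * ((2 ^ (n + 1) - 1) / 3) + 1 := by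
            have h8 : (2:ℕ) ^ (n + 2 + 1) = 4 * 2 ^ (n + 1) := by ring
            rw [h8, hc]; omega
          constructor
          · intro h
            obtain ⟨a, ha⟩ := hod2
            obtain ⟨b, hb⟩ := h
            omega
          · intro _
            rw [stepA H H hH n x, stepB F G hG n x⁻¹,
              (ih1.1 hev1), (ih2.2 hod), key_E, key_O,
              ← inv_pow x 2, ← inv_pow x 4]
            field_simp
            ring
  intro n x hx
  have h := main n x hx
  constructor
  · intro hev
    rw [trunc_eval, trunc_eval]
    exact h.1 hev
  · intro hod
    rw [trunc_eval, trunc_eval]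
    exact h.2 hod
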